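/- Let P be a finite poset, let T ⊆ H_P be a line connected subgraph that is a tree, let P_T be the sub-poset generated by T, and let M be a kP-module whose gradient vanishes on T (i.e. there is a natural isomorphism β*(M_T) ≅ φ*(M_T)). Then M_T is locally constant (that is, M(u ≤ v) is an isomorphism for every relation u ≤ v in P_T) if and only if M(u ≤ v) is an isomorphism for at least one covering relation u ⋖ v in P_T. -/

import Mathlib

/-!
The naturality square of the gradient isomorphism `α` at two consecutive edges `e = (a, b)`
and `f = (b, c)` of `T` reads `α_f ∘ M(a ≤ b) = M(b ≤ c) ∘ α_e`, so `M` is an isomorphism on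
`e` iff it is one on `f`. Line connectedness propagates this to all edges of `T`, and every
relation of `P_T` is a composite of edges. Conversely, a covering relation of `P_T` is an edge
of `T`, and an edge of `T` is a covering relation of `P_T`.
-/

/-- A `kP`-module: a functor from the poset `P` to finite dimensional
`k`-vector spaces, given by concrete data. -/
structure PModule (k : Type) (P : Type) [Field k] [Preorder P] where
  V : P → Type
  [acg : ∀ x, AddCommGroup (V x)]
  [mod : ∀ x, Module k (V x)]
  [fd : ∀ x, FiniteDimensional k (V x)]
  map : ∀ {x y : P}, x ≤ y → (V x →ₗ[k] V y)
  map_id : ∀ x : P, map (le_refl x) = LinearMap.id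
  map_comp : ∀ {x y z : P} (h₁ : x ≤ y) (h₂ : y ≤ z), map (h₁.trans h₂) = (map h₂).comp (map h₁)

attribute [instance] PModule.acg PModule.mod PModule.fd

/-- The order of the sub-poset `P_T`, for `T` with vertex set `Tv` and edge set `Te`. -/
def ptle {P : Type} [PartialOrder P] (Tv : Set P) (Te : Set (P × P)) (a b : ↥Tv) : Prop :=
  Relation.ReflTransGen (fun x y : ↥Tv => ((x : P), (y : P)) ∈ Te) a b

def ptlt {P : Type} [PartialOrder P] (Tv : Set P) (Te : Set (P × P)) (a b : ↥Tv) : Prop :=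
  ptle Tv Te a b ∧ ¬ ptle Tv Te b a

def ptcov {P : Type} [PartialOrder P] (Tv : Set P) (Te : Set (P × P)) (a b : ↥Tv) : Prop :=
  ptlt Tv Te a b ∧ ∀ c : ↥Tv, ptlt Tv Te a c → ¬ ptlt Tv Te c b

/-- The order relation of the line poset of `P_T`, whose elements are the edges of `T`:
`e ≤ f` iff there is a chain of consecutive edges from `e` to `f`. -/
def tline {P : Type} [PartialOrder P] (Te : Set (P × P)) (e f : ↥Te) : Prop :=
  Relation.ReflTransGen (fun a b : ↥Te => (a : P × P).2 = (b : P × P).1) e f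

open Function

theorem Function.bijective_iff_of_comp_eq_comp {α β γ δ E₁ E₂ : Type*} [EquivLike E₁ α γ]
    [EquivLike E₂ β δ] {f : α → β} {g : γ → δ} (e₁ : E₁) (e₂ : E₂) (h : e₂ ∘ f = g ∘ e₁) :
    Bijective f ↔ Bijective g := by
  rw [← EquivLike.comp_bijective f e₂, h, EquivLike.bijective_comp]

theorem SimpleGraph.Preconnected.iff_of_adj {V : Type*} {G : SimpleGraph V}
    (hG : G.Preconnected) {p : V → Prop} (hp : ∀ ⦃x y⦄, G.Adj x y → (p x ↔ p y)) (x y : V) :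
    p x ↔ p y := by
  obtain ⟨w⟩ := hG x y
  induction w with
  | nil => rfl
  | cons hadj _ ih => exact (hp hadj).trans ih

section SubPoset

variable {P : Type} [PartialOrder P] {Tv : Set P} {Te : Set (P × P)}

theorem ptle.le (hle : ∀ e ∈ Te, e.1 ≤ e.2) {u v : Tv} (h : ptle Tv Te u v) :
    (u : P) ≤ v := by
  induction h with
  | refl => rfl
  | tail _ hcv ih => exact ih.trans (hle _ hcv)

theorem ptlt.lt (hle : ∀ e ∈ Te, e.1 ≤ e.2) {u v : Tv} (h : ptlt Tv Te u v) :
    (u : P) < v := by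
  refine (h.1.le hle).lt_of_ne fun huv => h.2 ?_
  obtain rfl := Subtype.ext huv
  exact .refl

theorem ptcov_of_mem_of_covBy (hle : ∀ e ∈ Te, e.1 ≤ e.2) {u v : Tv}
    (huv : ((u : P), (v : P)) ∈ Te) (hcov : (u : P) ⋖ v) : ptcov Tv Te u v :=
  ⟨⟨.single huv, fun hvu => hcov.lt.not_ge (hvu.le hle)⟩,
    fun _ huc hcv => hcov.2 (huc.lt hle) (hcv.lt hle)⟩

theorem mem_of_ptcov (hlt : ∀ e ∈ Te, e.1 < e.2) {u v : Tv} (h : ptcov Tv Te u v) :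
    ((u : P), (v : P)) ∈ Te := by
  have hle : ∀ e ∈ Te, e.1 ≤ e.2 := fun e he => (hlt e he).le
  obtain ⟨⟨huv, hvu⟩, hmid⟩ := h
  rcases huv.cases_head with rfl | ⟨c, huc, hcv⟩
  · exact absurd .refl hvu
  obtain rfl | hcv_ne := eq_or_ne c v
  · exact huc
  have huc_lt : ptlt Tv Te u c := ⟨.single huc, fun hcu => (hlt _ huc).not_ge (hcu.le hle)⟩
  have hcv_lt : ptlt Tv Te c v :=
    ⟨hcv, fun hvc => hcv_ne (Subtype.ext ((ptle.le hle hcv).antisymm (hvc.le hle)))⟩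
  exact absurd hcv_lt (hmid c huc_lt)

end SubPoset

namespace PModule

variable {k : Type} [Field k]

section Preorder

variable {P : Type} [Preorder P] (M : PModule k P)

theorem bijective_map_iff_of_naturality {a b c : P} (hab : a ≤ b) (hbc : b ≤ c)
    (α₁ : M.V a ≃ₗ[k] M.V b) (α₂ : M.V b ≃ₗ[k] M.V c)
    (hα : α₂.toLinearMap ∘ₗ M.map hab = M.map hbc ∘ₗ α₁.toLinearMap) :
    Bijective (M.map hab) ↔ Bijective (M.map hbc) :=
  bijective_iff_of_comp_eq_comp α₁ α₂ (congrArg DFunLike.coe hα)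

theorem bijective_map_edge_iff_of_naturality {Te : Set (P × P)} (hle : ∀ e ∈ Te, e.1 ≤ e.2)
    (hlc : (SimpleGraph.fromRel (fun e f : ↥Te => (e : P × P).2 = (f : P × P).1)).Connected)
    (α : ∀ e : ↥Te, M.V (e : P × P).1 ≃ₗ[k] M.V (e : P × P).2)
    (hα : ∀ e f : ↥Te, (e : P × P).2 = (f : P × P).1 →
      ∀ (h1 : (e : P × P).1 ≤ (f : P × P).1) (h2 : (e : P × P).2 ≤ (f : P × P).2),
        (α f).toLinearMap ∘ₗ M.map h1 = M.map h2 ∘ₗ (α e).toLinearMap)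
    (e f : ↥Te) : Bijective (M.map (hle e e.2)) ↔ Bijective (M.map (hle f f.2)) := by
  have step : ∀ e f : ↥Te, (e : P × P).2 = (f : P × P).1 →
      (Bijective (M.map (hle e e.2)) ↔ Bijective (M.map (hle f f.2))) := by
    rintro ⟨⟨a, b⟩, he⟩ ⟨⟨b', c⟩, hf⟩ (rfl : b = b')
    exact M.bijective_map_iff_of_naturality _ _ (α ⟨(a, b), he⟩) (α ⟨(b, c), hf⟩)
      (hα ⟨(a, b), he⟩ ⟨(b, c), hf⟩ rfl (hle _ he) (hle _ hf))
  refine hlc.preconnected.iff_of_adj (p := fun e : ↥Te => Bijective (M.map (hle e e.2)))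
    (fun e f hef => ?_) e f
  rcases ((SimpleGraph.fromRel_adj _ _ _).1 hef).2 with h | h
  exacts [step e f h, (step f e h).symm]

end Preorder

theorem bijective_map_of_ptle {P : Type} [PartialOrder P] (M : PModule k P)
    {Tv : Set P} {Te : Set (P × P)} (hle : ∀ e ∈ Te, e.1 ≤ e.2)
    (hedge : ∀ e (he : e ∈ Te), Bijective (M.map (hle e he))) {u v : Tv}
    (huv : ptle Tv Te u v) (h : (u : P) ≤ v) : Bijective (M.map h) := by
  induction huv with
  | refl =>
    rw [M.map_id]
    exact bijective_id
  | tail huc hcv ih =>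
    rw [M.map_comp (ptle.le hle huc) (hle _ hcv)]
    exact (hedge _ hcv).comp (ih _)

end PModule

theorem statement1_general (k : Type) [Field k] (P : Type) [PartialOrder P]
    (Tv : Set P) (Te : Set (P × P))
    -- `T` is a subgraph of the Hasse diagram `H_P`, with vertex set `Tv` and edge set `Te`
    (hTe : ∀ e ∈ Te, (e.1 ⋖ e.2) ∧ e.1 ∈ Tv ∧ e.2 ∈ Tv)
    -- `T` is line connected: the line digraph of `T` is connected as an undirected graph
    (hlc : (SimpleGraph.fromRel (fun e f : ↥Te => (e : P × P).2 = (f : P × P).1)).Connected)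
    (M : PModule k P)
    -- the gradient of `M` vanishes on `T`: a natural isomorphism `β*(M_T) ≅ φ*(M_T)`
    (hgrad : ∃ α : ∀ e : ↥Te, (M.V (e : P × P).1 ≃ₗ[k] M.V (e : P × P).2),
      ∀ (e f : ↥Te), tline Te e f →
        ∀ (h1 : (e : P × P).1 ≤ (f : P × P).1) (h2 : (e : P × P).2 ≤ (f : P × P).2),
          (α f).toLinearMap.comp (M.map h1) = (M.map h2).comp (α e).toLinearMap) :
    -- `M_T` is locally constant iff `M` is an isomorphism on some covering relation of `P_T`
    (∀ u v : ↥Tv, ptle Tv Te u v → ∀ h : (u : P) ≤ (v : P), Function.Bijective (M.map h)) ↔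
      (∃ u v : ↥Tv, ptcov Tv Te u v ∧ ∃ h : (u : P) ≤ (v : P), Function.Bijective (M.map h)) := by
  obtain ⟨α, hα⟩ := hgrad
  have hlt : ∀ e ∈ Te, e.1 < e.2 := fun e he => (hTe e he).1.lt
  have hle : ∀ e ∈ Te, e.1 ≤ e.2 := fun e he => (hlt e he).le
  have hedges := M.bijective_map_edge_iff_of_naturality hle hlc α
    fun e f hef => hα e f (.single hef)
  constructor
  · intro hloc
    obtain ⟨⟨⟨a, b⟩, hab⟩⟩ := hlc.nonempty
    obtain ⟨hcov, ha, hb⟩ := hTe _ hab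
    exact ⟨⟨a, ha⟩, ⟨b, hb⟩, ptcov_of_mem_of_covBy hle hab hcov, hcov.le,
      hloc ⟨a, ha⟩ ⟨b, hb⟩ (.single hab) hcov.le⟩
  · rintro ⟨u, v, huv, _, hbij⟩
    refine fun _ _ => M.bijective_map_of_ptle hle fun e he => ?_
    exact (hedges ⟨_, mem_of_ptcov hlt huv⟩ ⟨e, he⟩).1 hbij

theorem statement1 (k : Type) [Field k] (P : Type) [Fintype P] [PartialOrder P]
    (Tv : Set P) (Te : Set (P × P))
    -- `T` is a subgraph of the Hasse diagram `H_P`, with vertex set `Tv` and edge set `Te`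
    (hTe : ∀ e ∈ Te, (e.1 ⋖ e.2) ∧ e.1 ∈ Tv ∧ e.2 ∈ Tv)
    -- `T` is a tree: its underlying undirected graph is connected and acyclic
    (htree : (SimpleGraph.fromRel (fun a b : ↥Tv => ((a : P), (b : P)) ∈ Te)).IsTree)
    -- `T` is line connected: the line digraph of `T` is connected as an undirected graph
    (hlc : (SimpleGraph.fromRel (fun e f : ↥Te => (e : P × P).2 = (f : P × P).1)).Connected)
    (M : PModule k P)
    -- the gradient of `M` vanishes on `T`: a natural isomorphism `β*(M_T) ≅ φ*(M_T)`
    (hgrad : ∃ α : ∀ e : ↥Te, (M.V (e : P × P).1 ≃ₗ[k] M.V (e : P × P).2),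
      ∀ (e f : ↥Te), tline Te e f →
        ∀ (h1 : (e : P × P).1 ≤ (f : P × P).1) (h2 : (e : P × P).2 ≤ (f : P × P).2),
          (α f).toLinearMap.comp (M.map h1) = (M.map h2).comp (α e).toLinearMap) :
    -- `M_T` is locally constant iff `M` is an isomorphism on some covering relation of `P_T`
    (∀ u v : ↥Tv, ptle Tv Te u v → ∀ h : (u : P) ≤ (v : P), Function.Bijective (M.map h)) ↔
      (∃ u v : ↥Tv, ptcov Tv Te u v ∧ ∃ h : (u : P) ≤ (v : P), Function.Bijective (M.map h)) :=
  statement1_general k P Tv Te hTe hlc M hgrad
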